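/- Fix n ≥ 3 and let eval map a word w : List (Fin n × Bool) to the ordered product in Equiv.Perm (Option (Fin n × ℕ)) of the shifts s_i (for letters (i, true)) and their inverses s_i⁻¹ (for letters (i, false)). If eval w is not the identity permutation, then there exist lists x and y with w = x ++ y such that (eval (y ++ x)) none ≠ none, i.e. some cyclic permutation of w moves the center of the star. -/

import Mathlib

/-- Modular successor on `Fin n`. -/
def fsucc {n : ℕ} (i : Fin n) : Fin n :=
  ⟨(i.val + 1) % n, Nat.mod_lt _ (Nat.lt_of_le_of_lt (Nat.zero_le _) i.isLt)⟩

lemma fsucc_ne {n : ℕ} (hn : 2 ≤ n) (i : Fin n) : fsucc i ≠ i := by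
  rcases Nat.lt_or_ge (i.val + 1) n with h | h
  · intro he
    have : (i.val + 1) % n = i.val := congrArg Fin.val he
    rw [Nat.mod_eq_of_lt h] at this
    omega
  · intro he
    have hi := i.isLt
    have hn1 : i.val + 1 = n := by omega
    have : (i.val + 1) % n = i.val := congrArg Fin.val he
    rw [hn1, Nat.mod_self] at this
    omega

/-- The underlying function of the shift `s_i` on the star `*^n` with center `none`. -/
def shiftFun {n : ℕ} (i : Fin n) : Option (Fin n × ℕ) → Option (Fin n × ℕ)
  | none => some (fsucc i, 0)
  | some (l, k) =>
      if l = i then (match k with | 0 => none | Nat.succ k' => some (i, k'))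
      else if l = fsucc i then some (fsucc i, k + 1)
      else some (l, k)

/-- The inverse of `shiftFun i`. -/
def shiftInvFun {n : ℕ} (i : Fin n) : Option (Fin n × ℕ) → Option (Fin n × ℕ)
  | none => some (i, 0)
  | some (l, k) =>
      if l = i then some (i, k + 1)
      else if l = fsucc i then (match k with | 0 => none | Nat.succ k' => some (fsucc i, k'))
      else some (l, k)

/-- The shift `s_i`, as a permutation of the star `*^n`. -/
def shift {n : ℕ} (hn : 2 ≤ n) (i : Fin n) : Equiv.Perm (Option (Fin n × ℕ)) where
  toFun := shiftFun i
  invFun := shiftInvFun i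
  left_inv := by
    have hs := fsucc_ne hn i
    rintro (_ | ⟨l, k⟩)
    · simp [shiftFun, shiftInvFun, hs]
    · by_cases hl : l = i
      · subst hl
        cases k with
        | zero => simp [shiftFun, shiftInvFun]
        | succ k' => simp [shiftFun, shiftInvFun]
      · by_cases hl2 : l = fsucc i
        · subst hl2; simp [shiftFun, shiftInvFun, hs]
        · simp [shiftFun, shiftInvFun, hl, hl2]
  right_inv := by
    have hs := fsucc_ne hn i
    rintro (_ | ⟨l, k⟩)
    · simp [shiftFun, shiftInvFun, hs]
    · by_cases hl : l = i
      · subst hl; simp [shiftFun, shiftInvFun]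
      · by_cases hl2 : l = fsucc i
        · subst hl2
          cases k with
          | zero => simp [shiftFun, shiftInvFun, hs]
          | succ k' => simp [shiftFun, shiftInvFun, hs]
        · simp [shiftFun, shiftInvFun, hl, hl2]

/-- Evaluation of a signed word over the alphabet `A` in the group `G`. -/
def evalWord {G A : Type*} [Group G] (f : A → G) (w : List (A × Bool)) : G :=
  (w.map fun p => if p.2 then f p.1 else (f p.1)⁻¹).prod

/-! Suppose every cyclic rotation of `w` fixes the center and let `g = eval w`. Writing
`w = x ++ y`, the rotation `y ++ x` evaluates to `X⁻¹ g X`, so `g` fixes `X none` for every prefix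
`x`. Follow a point `v` letter by letter along the periodic word `…www…` in both directions. If
this path meets the center, then some `g ^ q v` is a point `X none`, which `g` fixes, so `g v = v`.
Otherwise the path never leaves the ray of `v`, where every letter acts as a translation of the
depth; so `g` translates the depths of the orbit of `v` by a fixed amount, and since depths are
nonnegative in both directions that amount is zero. -/

section EvalWord

variable {G A : Type*} [Group G] (f : A → G)

@[simp]
lemma evalWord_nil : evalWord f [] = 1 := rfl

lemma evalWord_append (u v : List (A × Bool)) :
    evalWord f (u ++ v) = evalWord f u * evalWord f v := by
  simp [evalWord]

lemma evalWord_cons (p : A × Bool) (u : List (A × Bool)) :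
    evalWord f (p :: u) = evalWord f [p] * evalWord f u :=
  evalWord_append f [p] u

lemma evalWord_take_mul_drop (w : List (A × Bool)) (r : ℕ) :
    evalWord f (w.take r) * evalWord f (w.drop r) = evalWord f w := by
  rw [← evalWord_append, List.take_append_drop]

end EvalWord

lemma Equiv.Perm.mul_apply_eq_self_of_apply_zpow_eq {α : Type*} {a b : Equiv.Perm α} {o v : α}
    (ho : (b * a) o = o) (q : ℤ) (hv : b (((a * b) ^ q) v) = o) : (a * b) v = v := by
  set g := a * b
  have hfix : g (a o) = a o := congrArg a ho
  have horbit : (g ^ (1 + q)) v = a o := by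
    rw [zpow_one_add, Equiv.Perm.mul_apply, ← hv]
    rfl
  apply (g ^ (1 + q)).injective
  calc (g ^ (1 + q)) (g v) = g ((g ^ (1 + q)) v) := by
        rw [← Equiv.Perm.mul_apply, ← Equiv.Perm.mul_apply, (Commute.self_zpow g _).eq]
    _ = (g ^ (1 + q)) v := by rw [horbit, hfix]

lemma Int.eq_zero_of_forall_add_mul_nonneg {k d : ℤ} (h : ∀ q : ℤ, 0 ≤ k + q * d) : d = 0 := by
  by_contra hd
  have hsq : 0 < d ^ 2 := by positivity
  have := h (-(k + 1) * d)
  nlinarith [h 0]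

section Star

variable {n : ℕ} (hn : 2 ≤ n)

/-- Off the center, a letter keeps every point on its ray and changes its depth by this amount. -/
def rayDrift (p : Fin n × Bool) (L : Fin n) : ℤ :=
  (if p.2 then 1 else -1) * (if L = p.1 then -1 else if L = fsucc p.1 then 1 else 0)

lemma evalWord_singleton_apply_some {p : Fin n × Bool} {L : Fin n} {k : ℕ}
    (h : evalWord (shift hn) [p] (some (L, k)) ≠ none) :
    ∃ k' : ℕ, evalWord (shift hn) [p] (some (L, k)) = some (L, k') ∧
      (k' : ℤ) = k + rayDrift p L := by
  obtain ⟨i, b⟩ := p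
  have hsucc := fsucc_ne hn i
  have hword : evalWord (shift hn) [(i, b)] (some (L, k)) =
      if b then shiftFun i (some (L, k)) else shiftInvFun i (some (L, k)) := by
    cases b <;> rfl
  rw [hword] at h ⊢
  by_cases hi : L = i <;> by_cases hs : L = fsucc i <;> cases b <;> cases k <;>
    simp_all [shiftFun, shiftInvFun, rayDrift]

def wordRayDrift (u : List (Fin n × Bool)) (L : Fin n) : ℤ :=
  (u.map (rayDrift · L)).sum

lemma evalWord_apply_some_of_forall_drop {u : List (Fin n × Bool)} {L : Fin n} {k : ℕ}
    (h : ∀ r, evalWord (shift hn) (u.drop r) (some (L, k)) ≠ none) :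
    ∃ k' : ℕ, evalWord (shift hn) u (some (L, k)) = some (L, k') ∧
      (k' : ℤ) = k + wordRayDrift u L := by
  induction u with
  | nil => exact ⟨k, rfl, by simp [wordRayDrift]⟩
  | cons p u ih =>
    obtain ⟨k₁, hu, hk₁⟩ := ih fun r => h (r + 1)
    have hp : evalWord (shift hn) [p] (some (L, k₁)) ≠ none := by
      simpa [evalWord_cons _ p u, hu] using h 0
    obtain ⟨k₂, hp', hk₂⟩ := evalWord_singleton_apply_some hn hp
    refine ⟨k₂, by rw [evalWord_cons, Equiv.Perm.mul_apply, hu, hp'], ?_⟩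
    simp only [wordRayDrift, List.map_cons, List.sum_cons] at hk₁ ⊢
    omega

lemma evalWord_apply_eq_self_of_orbit_avoids_center {w : List (Fin n × Bool)}
    {x : Option (Fin n × ℕ)}
    (h : ∀ (q : ℤ) (r : ℕ),
      evalWord (shift hn) (w.drop r) ((evalWord (shift hn) w ^ q) x) ≠ none) :
    evalWord (shift hn) w x = x := by
  set g := evalWord (shift hn) w
  have hsome : ∀ q : ℤ, ∃ y, (g ^ q) x = some y := fun q =>
    Option.ne_none_iff_exists'.mp (by simpa using h q w.length)
  have hstep : ∀ (q : ℤ) (L : Fin n) (k : ℕ), (g ^ q) x = some (L, k) →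
      ∃ k' : ℕ, (g ^ (q + 1)) x = some (L, k') ∧ (k' : ℤ) = k + wordRayDrift w L := by
    intro q L k hq
    rw [add_comm, zpow_one_add, Equiv.Perm.mul_apply, hq]
    exact evalWord_apply_some_of_forall_drop hn fun r => hq ▸ h q r
  obtain ⟨⟨L, k⟩, hx⟩ := hsome 0
  have horbit : ∀ q : ℤ, ∃ k' : ℕ, (g ^ q) x = some (L, k') ∧
      (k' : ℤ) = k + q * wordRayDrift w L := by
    intro q
    induction q using Int.induction_on with
    | zero => exact ⟨k, hx, by simp⟩
    | succ q ih =>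
      obtain ⟨k₁, hq, hk₁⟩ := ih
      obtain ⟨k₂, hq', hk₂⟩ := hstep q L k₁ hq
      exact ⟨k₂, hq', by rw [hk₂, hk₁]; ring⟩
    | pred q ih =>
      obtain ⟨k₁, hq, hk₁⟩ := ih
      obtain ⟨⟨L', k₂⟩, hq'⟩ := hsome (-q - 1)
      obtain ⟨k₃, hq'', hk₃⟩ := hstep (-q - 1) L' k₂ hq'
      rw [sub_add_cancel, hq] at hq''
      obtain ⟨rfl, rfl⟩ := Prod.mk.inj (Option.some.inj hq'')
      exact ⟨k₂, hq', by rw [sub_mul]; linarith⟩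
  have hdrift : wordRayDrift w L = 0 := Int.eq_zero_of_forall_add_mul_nonneg (k := k) fun q => by
    obtain ⟨k', -, hk'⟩ := horbit q
    omega
  obtain ⟨k', hx', hk'⟩ := horbit 1
  simp only [zpow_one, hdrift, mul_zero, add_zero, Nat.cast_inj] at hx' hk'
  simp only [zpow_zero, Equiv.Perm.one_apply] at hx
  rw [hx', hx, hk']

end Star

theorem exists_cyclic_permutation_moving_center (n : ℕ) (hn : 3 ≤ n)
    (w : List (Fin n × Bool))
    (hw : evalWord (fun i : Fin n => shift (by omega : 2 ≤ n) i) w ≠ 1) :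
    ∃ x y : List (Fin n × Bool), w = x ++ y ∧
      (evalWord (fun i : Fin n => shift (by omega : 2 ≤ n) i) (y ++ x))
        (none : Option (Fin n × ℕ)) ≠ none := by
  have hn2 : 2 ≤ n := by omega
  by_contra! hrot
  refine hw (Equiv.ext fun v => ?_)
  by_cases hcenter : ∃ (q : ℤ) (r : ℕ),
      evalWord (shift hn2) (w.drop r) ((evalWord (shift hn2) w ^ q) v) = none
  · obtain ⟨q, r, hqr⟩ := hcenter
    have hfix := hrot (w.take r) (w.drop r) (List.take_append_drop r w).symm
    rw [evalWord_append] at hfix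
    rw [← evalWord_take_mul_drop _ w r] at hqr ⊢
    exact Equiv.Perm.mul_apply_eq_self_of_apply_zpow_eq hfix q hqr
  · push Not at hcenter
    exact evalWord_apply_eq_self_of_orbit_avoids_center hn2 hcenter
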